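/- Let Q, Q′ : ℝ → ℝ be functions of the form Q(g) = sup_{x∈A} inf_{y∈B} [F(x,y) + a(x,y)g] and Q′(g) = sup_{x∈A′} inf_{y∈B} [F(x,y) + a(x,y)g], where A, A′, B are nonempty sets, F and a are real-valued, and sup_{(x,y)∈A×B} a(x,y) < inf_{(x,y)∈A′×B} a(x,y), with all suprema/infima finite. Then the set {g ∈ ℝ : Q(g) = Q′(g)} contains at most one point. -/

import Mathlib

/-!
Write `Q_A(g) = sup_{x ∈ A} inf_{y ∈ B} (F x y + a x y * g)`. Since every slope on `A × B` is at
most `s = sup a`, moving `g` up by `c > 0` raises `Q_A` by at most `c * s`; since every slope on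
`A' × B` is at least `i = inf a > s`, it raises `Q_{A'}` by at least `c * i`. So once `Q_A` and
`Q_{A'}` agree at some `g`, `Q_A < Q_{A'}` strictly to the right of `g`, and they cannot agree at a
second point.
-/

open Set

theorem Set.subsingleton_setOf_eq_of_forall_lt {γ δ : Type*} [LinearOrder γ] [Preorder δ]
    {f h : γ → δ} (hlt : ∀ g g', g < g' → f g = h g → f g' < h g') :
    {g | f g = h g}.Subsingleton := by
  intro g₁ hg₁ g₂ hg₂
  by_contra hne
  rcases lt_or_gt_of_ne hne with h₁₂ | h₂₁
  · exact (hlt g₁ g₂ h₁₂ hg₁).ne hg₂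
  · exact (hlt g₂ g₁ h₂₁ hg₂).ne hg₁

section SupInf

variable {ι ι' κ : Type*}

theorem ciSup_ciInf_le_ciSup_ciInf_add [Nonempty ι] [Nonempty κ] {u v : ι → κ → ℝ} {c : ℝ}
    (hv : ∀ x, BddBelow (range (v x))) (hu : BddAbove (range fun x => ⨅ y, u x y))
    (h : ∀ x y, v x y ≤ u x y + c) :
    ⨆ x, ⨅ y, v x y ≤ (⨆ x, ⨅ y, u x y) + c :=
  ciSup_le fun x => by
    have hinf : (⨅ y, v x y) - c ≤ ⨅ y, u x y :=
      le_ciInf fun y => by linarith [ciInf_le (hv x) y, h x y]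
    linarith [le_ciSup hu x]

noncomputable def supInfAffine (F a : ι → κ → ℝ) (g : ℝ) : ℝ :=
  ⨆ x, ⨅ y, (F x y + a x y * g)

variable [Nonempty ι] [Nonempty κ] {F a : ι → κ → ℝ} {g g' : ℝ}

theorem supInfAffine_le_add_of_le (hg : g ≤ g') {s : ℝ} (ha : ∀ x y, a x y ≤ s)
    (hbdd : ∀ x, BddBelow (range fun y => F x y + a x y * g'))
    (hbdd' : BddAbove (range fun x => ⨅ y, (F x y + a x y * g))) :
    supInfAffine F a g' ≤ supInfAffine F a g + (g' - g) * s :=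
  ciSup_ciInf_le_ciSup_ciInf_add hbdd hbdd' fun x y => by
    nlinarith [mul_le_mul_of_nonneg_left (ha x y) (sub_nonneg.2 hg)]

theorem add_le_supInfAffine_of_le (hg : g ≤ g') {i : ℝ} (ha : ∀ x y, i ≤ a x y)
    (hbdd : ∀ x, BddBelow (range fun y => F x y + a x y * g))
    (hbdd' : BddAbove (range fun x => ⨅ y, (F x y + a x y * g'))) :
    supInfAffine F a g + (g' - g) * i ≤ supInfAffine F a g' :=
  le_sub_iff_add_le.1 <| ciSup_ciInf_le_ciSup_ciInf_add hbdd hbdd' fun x y => by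
    nlinarith [mul_le_mul_of_nonneg_left (ha x y) (sub_nonneg.2 hg)]

theorem supInfAffine_lt_of_eq_of_lt [Nonempty ι'] {F' a' : ι' → κ → ℝ} {s i : ℝ}
    (ha : ∀ x y, a x y ≤ s) (ha' : ∀ x y, i ≤ a' x y) (hsi : s < i)
    (hbdd : ∀ g x, BddBelow (range fun y => F x y + a x y * g))
    (hbdd' : ∀ g x, BddBelow (range fun y => F' x y + a' x y * g))
    (hsup : ∀ g, BddAbove (range fun x => ⨅ y, (F x y + a x y * g)))
    (hsup' : ∀ g, BddAbove (range fun x => ⨅ y, (F' x y + a' x y * g)))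
    (hlt : g < g') (heq : supInfAffine F a g = supInfAffine F' a' g) :
    supInfAffine F a g' < supInfAffine F' a' g' :=
  calc supInfAffine F a g'
      ≤ supInfAffine F a g + (g' - g) * s :=
        supInfAffine_le_add_of_le hlt.le ha (hbdd g') (hsup g)
    _ < supInfAffine F' a' g + (g' - g) * i := by
        rw [heq]; gcongr
    _ ≤ supInfAffine F' a' g' :=
        add_le_supInfAffine_of_le hlt.le ha' (hbdd' g) (hsup' g')

end SupInf

/-- if the slopes on `A × B` are uniformly strictly smaller than the
slopes on `A′ × B`, then the two sup-inf functions `Q`, `Q′` of `g` agree at most at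
one point. -/
theorem sup_inf_affine_agree_at_most_once
    {α β : Type*} (A A' : Set α) (B : Set β)
    (hA : A.Nonempty) (hA' : A'.Nonempty) (hB : B.Nonempty)
    (F a : α → β → ℝ)
    (hbb : ∀ (g : ℝ) (x : α), x ∈ A ∪ A' →
      BddBelow (Set.range fun y : B => F x y.1 + a x y.1 * g))
    (hba : ∀ g : ℝ, BddAbove (Set.range fun x : A => ⨅ y : B, (F x.1 y.1 + a x.1 y.1 * g)))
    (hba' : ∀ g : ℝ, BddAbove (Set.range fun x : A' => ⨅ y : B, (F x.1 y.1 + a x.1 y.1 * g)))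
    (haAbove : BddAbove (Set.range fun p : A × B => a p.1.1 p.2.1))
    (haBelow : BddBelow (Set.range fun p : A' × B => a p.1.1 p.2.1))
    (hsep : (⨆ p : A × B, a p.1.1 p.2.1) < ⨅ p : A' × B, a p.1.1 p.2.1) :
    {g : ℝ | (⨆ x : A, ⨅ y : B, (F x.1 y.1 + a x.1 y.1 * g)) =
             (⨆ x : A', ⨅ y : B, (F x.1 y.1 + a x.1 y.1 * g))}.Subsingleton := by
  have := hA.to_subtype
  have := hA'.to_subtype
  have := hB.to_subtype
  exact Set.subsingleton_setOf_eq_of_forall_lt fun g g' hlt heq =>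
    supInfAffine_lt_of_eq_of_lt (F := fun (x : A) (y : B) => F x y) (a := fun x y => a x y)
      (F' := fun (x : A') (y : B) => F x y) (a' := fun x y => a x y)
      (fun x y => le_ciSup haAbove (x, y)) (fun x y => ciInf_le haBelow (x, y)) hsep
      (fun g x => hbb g x (Or.inl x.2)) (fun g x => hbb g x (Or.inr x.2)) hba hba' hlt heq
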